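/- arXiv:1412.6836 — 2 statements merged into one kernel-verified Lean document; each statement's English description precedes it below -/
import Mathlib

section
/- Let R be a commutative ring, let A : R → Mₙ(R[t]) be given by a polynomial family of matrices, and suppose there exists Y ∈ Mₙ(R) with dA/dt = −(A·Y − Y·A) (derivative taken entrywise). Then d/dt (det A) = 0, i.e. det(A(t)) is a constant polynomial in t. -/
/-! By Jacobi's formula, `(det A)' = tr (adj A · A')`. Substituting `A' = -(AY - YA)` and using
that `adj A` commutes with `A`, cyclicity of the trace gives
`tr (adj A · A · Y) = tr (adj A · Y · A)`, so the derivative vanishes. -/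

open Polynomial Matrix

section Jacobi

variable {R m : Type*} [CommRing R] [Fintype m] [DecidableEq m]

theorem derivative_det_eq_sum_det_updateCol (A : Matrix m m R[X]) :
    derivative A.det = ∑ j, (A.updateCol j fun i => derivative (A i j)).det := by
  simp only [det_apply', derivative_sum, derivative_mul, derivative_intCast, zero_mul, zero_add]
  rw [Finset.sum_comm]
  refine Finset.sum_congr rfl fun σ _ => ?_
  rw [derivative_prod_finset, Finset.mul_sum]
  refine Finset.sum_congr rfl fun j _ => ?_
  have hprod : ∏ i, A.updateCol j (fun i => derivative (A i j)) (σ i) i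
      = derivative (A (σ j) j) * ∏ i ∈ Finset.univ.erase j, A (σ i) i := by
    rw [← Finset.mul_prod_erase _ _ (Finset.mem_univ j), updateCol_self]
    congr 1
    exact Finset.prod_congr rfl fun i hi => updateCol_ne (Finset.ne_of_mem_erase hi)
  rw [hprod]
  ring

theorem derivative_det_eq_trace_adjugate_mul (A : Matrix m m R[X]) :
    derivative A.det = trace (A.adjugate * A.map fun q => derivative q) := by
  rw [derivative_det_eq_sum_det_updateCol, trace]
  refine Finset.sum_congr rfl fun j _ => ?_
  rw [← cramer_apply, cramer_eq_adjugate_mulVec]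
  simp [mulVec, mul_apply, dotProduct]

end Jacobi

theorem trace_adjugate_mul_commutator {S m : Type*} [CommRing S] [Fintype m] [DecidableEq m]
    (A B : Matrix m m S) : trace (A.adjugate * (A * B - B * A)) = 0 := by
  rw [Matrix.mul_sub, trace_sub, ← Matrix.mul_assoc, adjugate_mul, ← Matrix.mul_assoc,
    trace_mul_cycle, mul_adjugate, sub_self]

/-- If a polynomial family of matrices `A(t)` satisfies `dA/dt = -[A, Y]` for a
constant matrix `Y`, then `det A(t)` is constant in `t`. -/
theorem det_constant_of_derivative_eq_neg_commutator
    {R : Type*} [CommRing R] {n : ℕ}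
    (A : Matrix (Fin n) (Fin n) (Polynomial R))
    (Y : Matrix (Fin n) (Fin n) R)
    (hA : A.map (fun q => derivative q) = -(A * Y.map C - Y.map C * A)) :
    derivative A.det = 0 := by
  rw [derivative_det_eq_trace_adjugate_mul, hA, Matrix.mul_neg, trace_neg,
    trace_adjugate_mul_commutator, neg_zero]
end

section
/- Let k be a field of characteristic p > 0 and let A be the k-algebra of k-linear endomorphisms of k[X]/(X^p). Then A is generated as a k-algebra by the two operators x (multiplication by X) and d (formal derivative), which satisfy [d, x] = 1, x^p = 0, d^p = 0; moreover A is isomorphic as a k-algebra to M_p(k), the p×p matrix algebra. -/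
/-!
On `k[X]/(X^n)` the operator `x * d` acts diagonally on the monomials, with `X ^ l ↦ l • X ^ l`.
When `0, 1, …, n - 1` are distinct in `k` (as they are in characteristic `n`), a Lagrange
polynomial `P` in `x * d` is the projection onto the constants, so `x ^ i * P * d ^ j / j!` is
the matrix unit sending `X ^ j` to `X ^ i` and the other monomials to `0`. The matrix units
span all endomorphisms, so `x` and `d` generate them.
-/

open Polynomial

theorem Module.Basis.subalgebra_eq_top_of_toLin_single_mem {R M ι : Type*} [CommRing R]
    [AddCommGroup M] [Module R M] [Fintype ι] [DecidableEq ι] (b : Module.Basis ι R M)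
    {S : Subalgebra R (Module.End R M)}
    (h : ∀ i j, Matrix.toLin b b (Matrix.single i j 1) ∈ S) : S = ⊤ := by
  refine eq_top_iff.2 fun f _ => ?_
  rw [← Matrix.toLin_toMatrix b b f, Matrix.matrix_eq_sum_single (LinearMap.toMatrix b b f)]
  simp only [map_sum]
  refine sum_mem fun i _ => sum_mem fun j _ => ?_
  have : Matrix.single i j (LinearMap.toMatrix b b f i j) =
      LinearMap.toMatrix b b f i j • Matrix.single i j 1 := by
    rw [Matrix.smul_single, smul_eq_mul, mul_one]
  rw [this, map_smul]
  exact S.smul_mem (h i j) _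

theorem Matrix.toLin_single_one_self {R M ι : Type*} [CommRing R]
    [AddCommGroup M] [Module R M] [Fintype ι] [DecidableEq ι] (b : Module.Basis ι R M)
    (i j l : ι) :
    Matrix.toLin b b (Matrix.single i j 1) (b l) = if l = j then b i else 0 := by
  rw [Matrix.toLin_self]
  split_ifs with h
  · simp [Matrix.single_apply, h]
  · simp [Ne.symm h]

theorem Nat.cast_factorial_ne_zero_of_injOn {k : Type*} [Semiring k] [NoZeroDivisors k]
    [Nontrivial k] {n j : ℕ} (hn : Set.InjOn (Nat.cast : ℕ → k) (Set.Iio n)) (hj : j < n) :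
    (j.factorial : k) ≠ 0 := by
  induction j with
  | zero => simp
  | succ j ih =>
    rw [Nat.factorial_succ, Nat.cast_mul]
    refine mul_ne_zero (fun h => j.succ_ne_zero (hn hj (by simp; omega) ?_)) (ih (by omega))
    rwa [Nat.cast_zero]

abbrev TruncatedPolynomial (R : Type*) [CommRing R] (n : ℕ) : Type _ :=
  R[X] ⧸ Ideal.span {(X : R[X]) ^ n}

namespace TruncatedPolynomial

variable {R : Type*} [CommRing R] {n : ℕ}

noncomputable def basisMonomials (R : Type*) [CommRing R] [Nontrivial R] (n : ℕ) :
    Module.Basis (Fin n) R (TruncatedPolynomial R n) :=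
  (AdjoinRoot.powerBasis' (monic_X_pow n)).basis.reindex
    (finCongr (by rw [AdjoinRoot.powerBasis'_dim, natDegree_X_pow]))

theorem basisMonomials_apply [Nontrivial R] (l : Fin n) :
    basisMonomials R n l = Ideal.Quotient.mk _ (X ^ (l : ℕ)) := by
  unfold basisMonomials
  erw [Module.Basis.reindex_apply, PowerBasis.basis_eq_pow]
  simp only [AdjoinRoot.powerBasis'_gen, ← AdjoinRoot.mk_X, finCongr_symm, finCongr_apply,
    Fin.val_cast, map_pow]
  rfl

theorem mulX_pow_apply {x : Module.End R (TruncatedPolynomial R n)}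
    (hx : ∀ f : R[X], x (Ideal.Quotient.mk _ f) = Ideal.Quotient.mk _ (X * f))
    (m : ℕ) (f : R[X]) :
    (x ^ m) (Ideal.Quotient.mk _ f) = Ideal.Quotient.mk _ (X ^ m * f) := by
  induction m generalizing f with
  | zero => simp
  | succ m ih => rw [pow_succ, Module.End.mul_apply, hx, ih, ← mul_assoc, ← pow_succ]

theorem derivative_pow_apply {d : Module.End R (TruncatedPolynomial R n)}
    (hd : ∀ f : R[X], d (Ideal.Quotient.mk _ f) = Ideal.Quotient.mk _ (derivative f))
    (m : ℕ) (f : R[X]) :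
    (d ^ m) (Ideal.Quotient.mk _ f) = Ideal.Quotient.mk _ (derivative^[m] f) := by
  induction m generalizing f with
  | zero => simp
  | succ m ih => rw [pow_succ, Module.End.mul_apply, hd, ih, Function.iterate_succ_apply]

theorem derivative_mul_sub_mul_derivative {x d : Module.End R (TruncatedPolynomial R n)}
    (hx : ∀ f : R[X], x (Ideal.Quotient.mk _ f) = Ideal.Quotient.mk _ (X * f))
    (hd : ∀ f : R[X], d (Ideal.Quotient.mk _ f) = Ideal.Quotient.mk _ (derivative f)) :
    d * x - x * d = 1 := by
  refine LinearMap.ext fun q => ?_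
  obtain ⟨f, rfl⟩ := Ideal.Quotient.mk_surjective q
  simp only [LinearMap.sub_apply, Module.End.mul_apply, Module.End.one_apply, hx, hd,
    derivative_mul, derivative_X, one_mul, map_add, add_sub_cancel_right]

theorem mulX_pow_self {x : Module.End R (TruncatedPolynomial R n)}
    (hx : ∀ f : R[X], x (Ideal.Quotient.mk _ f) = Ideal.Quotient.mk _ (X * f)) : x ^ n = 0 := by
  refine LinearMap.ext fun q => ?_
  obtain ⟨f, rfl⟩ := Ideal.Quotient.mk_surjective q
  rw [mulX_pow_apply hx, LinearMap.zero_apply, Ideal.Quotient.eq_zero_iff_mem]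
  exact Ideal.mem_span_singleton.2 (dvd_mul_right _ _)

theorem derivative_pow_self [Nontrivial R] {d : Module.End R (TruncatedPolynomial R n)}
    (hd : ∀ f : R[X], d (Ideal.Quotient.mk _ f) = Ideal.Quotient.mk _ (derivative f)) :
    d ^ n = 0 := by
  refine (basisMonomials R n).ext fun l => ?_
  rw [basisMonomials_apply, derivative_pow_apply hd, LinearMap.zero_apply,
    iterate_derivative_eq_zero (by rw [natDegree_X_pow]; exact l.2), map_zero]

theorem mulX_mul_derivative_monomial {x d : Module.End R (TruncatedPolynomial R n)}
    (hx : ∀ f : R[X], x (Ideal.Quotient.mk _ f) = Ideal.Quotient.mk _ (X * f))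
    (hd : ∀ f : R[X], d (Ideal.Quotient.mk _ f) = Ideal.Quotient.mk _ (derivative f)) (m : ℕ) :
    (x * d) (Ideal.Quotient.mk _ (X ^ m)) = (m : R) • Ideal.Quotient.mk _ (X ^ m) := by
  rw [Module.End.mul_apply, hd, hx, derivative_X_pow]
  cases m with
  | zero => simp
  | succ m =>
    rw [Nat.add_sub_cancel, mul_left_comm, ← pow_succ', ← smul_eq_C_mul]
    exact Submodule.Quotient.mk_smul _ _ _

section Field

open Finset

variable {k : Type*} [Field k]

noncomputable def constantProjection (x d : Module.End k (TruncatedPolynomial k n)) :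
    Module.End k (TruncatedPolynomial k n) :=
  aeval (x * d) (Lagrange.basis (range n) (Nat.cast : ℕ → k) 0)

theorem constantProjection_monomial {x d : Module.End k (TruncatedPolynomial k n)}
    (hx : ∀ f : k[X], x (Ideal.Quotient.mk _ f) = Ideal.Quotient.mk _ (X * f))
    (hd : ∀ f : k[X], d (Ideal.Quotient.mk _ f) = Ideal.Quotient.mk _ (derivative f))
    (hn : Set.InjOn (Nat.cast : ℕ → k) (Set.Iio n)) {l : ℕ} (hl : l < n) :
    constantProjection x d (Ideal.Quotient.mk _ (X ^ l)) =
      if l = 0 then Ideal.Quotient.mk _ 1 else 0 := by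
  rw [constantProjection,
    Module.End.aeval_apply_of_mem_apply_eq_smul (mulX_mul_derivative_monomial hx hd l)]
  split_ifs with hl0
  · subst hl0
    rw [Lagrange.eval_basis_self (by rwa [coe_range]) (mem_range.2 hl), one_smul, pow_zero]
  · rw [Lagrange.eval_basis_of_ne (Ne.symm hl0) (mem_range.2 hl), zero_smul]

theorem pow_mul_constantProjection_mul_pow_apply {x d : Module.End k (TruncatedPolynomial k n)}
    (hx : ∀ f : k[X], x (Ideal.Quotient.mk _ f) = Ideal.Quotient.mk _ (X * f))
    (hd : ∀ f : k[X], d (Ideal.Quotient.mk _ f) = Ideal.Quotient.mk _ (derivative f))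
    (hn : Set.InjOn (Nat.cast : ℕ → k) (Set.Iio n)) (i j l : Fin n) :
    (x ^ (i : ℕ) * constantProjection x d * d ^ (j : ℕ)) (basisMonomials k n l) =
      if l = j then ((j : ℕ).factorial : k) • basisMonomials k n i else 0 := by
  have hderiv : (d ^ (j : ℕ)) (basisMonomials k n l) =
      (((l : ℕ).descFactorial j : ℕ) : k) • Ideal.Quotient.mk _ (X ^ ((l : ℕ) - j)) := by
    rw [basisMonomials_apply, derivative_pow_apply hd, iterate_derivative_X_pow_eq_smul]
    exact Submodule.Quotient.mk_smul _ _ _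
  rw [Module.End.mul_apply, hderiv, map_smul, Module.End.mul_apply]
  obtain hlj | rfl | hjl := lt_trichotomy l j
  · rw [Nat.descFactorial_eq_zero_iff_lt.2 hlj, Nat.cast_zero, zero_smul, if_neg hlj.ne]
  · rw [Nat.descFactorial_self, Nat.sub_self, constantProjection_monomial hx hd hn l.pos,
      if_pos rfl, if_pos rfl, mulX_pow_apply hx, mul_one, basisMonomials_apply]
  · rw [constantProjection_monomial hx hd hn ((Nat.sub_le _ _).trans_lt l.2), if_neg (by omega),
      if_neg hjl.ne', map_zero, smul_zero]

theorem adjoin_mulX_derivative_eq_top {x d : Module.End k (TruncatedPolynomial k n)}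
    (hx : ∀ f : k[X], x (Ideal.Quotient.mk _ f) = Ideal.Quotient.mk _ (X * f))
    (hd : ∀ f : k[X], d (Ideal.Quotient.mk _ f) = Ideal.Quotient.mk _ (derivative f))
    (hn : Set.InjOn (Nat.cast : ℕ → k) (Set.Iio n)) :
    Algebra.adjoin k {x, d} = ⊤ := by
  have hxA : x ∈ Algebra.adjoin k {x, d} := Algebra.subset_adjoin (Set.mem_insert _ _)
  have hdA : d ∈ Algebra.adjoin k {x, d} :=
    Algebra.subset_adjoin (Set.mem_insert_of_mem _ rfl)
  refine (basisMonomials k n).subalgebra_eq_top_of_toLin_single_mem fun i j => ?_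
  have hunit : Matrix.toLin (basisMonomials k n) (basisMonomials k n) (Matrix.single i j 1) =
      ((j : ℕ).factorial : k)⁻¹ •
        (x ^ (i : ℕ) * constantProjection x d * d ^ (j : ℕ)) := by
    refine (basisMonomials k n).ext fun l => ?_
    rw [Matrix.toLin_single_one_self, LinearMap.smul_apply,
      pow_mul_constantProjection_mul_pow_apply hx hd hn]
    split_ifs
    · rw [inv_smul_smul₀ (Nat.cast_factorial_ne_zero_of_injOn hn j.2)]
    · rw [smul_zero]
  rw [hunit]
  refine Subalgebra.smul_mem _ (mul_mem (mul_mem (pow_mem hxA _) ?_) (pow_mem hdA _)) _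
  exact Algebra.adjoin_le (Set.singleton_subset_iff.2 (mul_mem hxA hdA))
    (aeval_mem_adjoin_singleton k _)

end Field

end TruncatedPolynomial

theorem endomorphisms_of_truncated_polynomials_general
    (p : ℕ) (k : Type*) [Field k] [CharP k p]
    (x d : Module.End k (Polynomial k ⧸ Ideal.span {(X : Polynomial k) ^ p}))
    (hx : ∀ f : Polynomial k,
      x (Ideal.Quotient.mk (Ideal.span {(X : Polynomial k) ^ p}) f) =
        Ideal.Quotient.mk (Ideal.span {(X : Polynomial k) ^ p}) (X * f))
    (hd : ∀ f : Polynomial k,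
      d (Ideal.Quotient.mk (Ideal.span {(X : Polynomial k) ^ p}) f) =
        Ideal.Quotient.mk (Ideal.span {(X : Polynomial k) ^ p}) (derivative f)) :
    (d * x - x * d = 1 ∧ x ^ p = 0 ∧ d ^ p = 0) ∧
    Algebra.adjoin k {x, d} = ⊤ ∧
    Nonempty ((Module.End k (Polynomial k ⧸ Ideal.span {(X : Polynomial k) ^ p}))
      ≃ₐ[k] Matrix (Fin p) (Fin p) k) :=
  ⟨⟨TruncatedPolynomial.derivative_mul_sub_mul_derivative hx hd,
      TruncatedPolynomial.mulX_pow_self hx, TruncatedPolynomial.derivative_pow_self hd⟩,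
    TruncatedPolynomial.adjoin_mulX_derivative_eq_top hx hd (CharP.natCast_injOn_Iio k p),
    ⟨algEquivMatrix (TruncatedPolynomial.basisMonomials k p)⟩⟩

/-- Over a field `k` of characteristic `p`, the algebra of `k`-linear endomorphisms
of `k[X]/(X^p)` is generated by the multiplication operator `x` and the derivative
operator `d`, which satisfy `[d,x] = 1`, `x^p = 0`, `d^p = 0`; and it is isomorphic
as a `k`-algebra to the matrix algebra `M_p(k)`. -/
theorem endomorphisms_of_truncated_polynomials
    (p : ℕ) [Fact p.Prime] (k : Type*) [Field k] [CharP k p]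
    (x d : Module.End k (Polynomial k ⧸ Ideal.span {(X : Polynomial k) ^ p}))
    (hx : ∀ f : Polynomial k,
      x (Ideal.Quotient.mk (Ideal.span {(X : Polynomial k) ^ p}) f) =
        Ideal.Quotient.mk (Ideal.span {(X : Polynomial k) ^ p}) (X * f))
    (hd : ∀ f : Polynomial k,
      d (Ideal.Quotient.mk (Ideal.span {(X : Polynomial k) ^ p}) f) =
        Ideal.Quotient.mk (Ideal.span {(X : Polynomial k) ^ p}) (derivative f)) :
    (d * x - x * d = 1 ∧ x ^ p = 0 ∧ d ^ p = 0) ∧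
    Algebra.adjoin k {x, d} = ⊤ ∧
    Nonempty ((Module.End k (Polynomial k ⧸ Ideal.span {(X : Polynomial k) ^ p}))
      ≃ₐ[k] Matrix (Fin p) (Fin p) k) :=
  endomorphisms_of_truncated_polynomials_general p k x d hx hd
end
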